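/- arXiv:2208.04454 — 6 statements merged into one kernel-verified Lean document; each statement's English description precedes it below -/
import Mathlib

section
/- Let P = [v₁,...,vₙ] be a closed polygon in ℝ³ with unit edge vectors u₁,...,uₙ, and suppose the points u₁,...,uₙ do not all lie on one great circle (i.e., they are not all contained in a single plane through the origin). Then the family {u₁,...,uₙ} is not contained in any closed hemisphere: for every nonzero w ∈ ℝ³ there is an index i with ⟪u_i, w⟫ < 0. -/
open scoped RealInnerProductSpace

noncomputable section

/-- ℝ³ as EuclideanSpace. -/
abbrev E3 : Type := EuclideanSpace ℝ (Fin 3)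

/-- Determinant of the 3×3 matrix with columns u, v, w. -/
def det3 (u v w : E3) : ℝ :=
  Matrix.det !![u 0, v 0, w 0; u 1, v 1, w 1; u 2, v 2, w 2]

/-- The minimizing great-circle arc joining two non-antipodal points of S². -/
def sphericalEdge (u v : E3) : Set E3 :=
  {p | ∃ a b : ℝ, 0 ≤ a ∧ 0 ≤ b ∧ (a ≠ 0 ∨ b ≠ 0) ∧
    p = ‖a • u + b • v‖⁻¹ • (a • u + b • v)}

/-- A spherical polygon: a cyclic sequence of distinct points of S² with consecutive
vertices non-antipodal. -/
def IsSphericalPolygon {n : ℕ} (u : ZMod n → E3) : Prop :=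
  (∀ i, ‖u i‖ = 1) ∧ Function.Injective u ∧ (∀ i, u (i + 1) ≠ -(u i))

/-- The i-th edge of a spherical polygon. -/
def polyEdge {n : ℕ} (u : ZMod n → E3) (i : ZMod n) : Set E3 :=
  sphericalEdge (u i) (u (i + 1))

/-- A spherical polygon is simple if non-adjacent edges are disjoint and adjacent
edges meet only in their common vertex. -/
def IsSimple {n : ℕ} (u : ZMod n → E3) : Prop :=
  (∀ i j : ZMod n, j ≠ i → j ≠ i + 1 → i ≠ j + 1 →
      Disjoint (polyEdge u i) (polyEdge u j)) ∧
  (∀ i : ZMod n, polyEdge u i ∩ polyEdge u (i + 1) = {u (i + 1)})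

/-- A family of points of S² is balanced if it is not contained in any closed
hemisphere. -/
def IsBalanced {ι : Type*} (u : ι → E3) : Prop :=
  ∀ w : E3, w ≠ 0 → ∃ i, ⟪u i, w⟫ < 0

/-- Points in general position: no three on a common great circle. -/
def GeneralPosition {ι : Type*} (u : ι → E3) : Prop :=
  ∀ i j k : ι, i ≠ j → i ≠ k → j ≠ k → det3 (u i) (u j) (u k) ≠ 0

/-- Spherical inflection of a spherical polygon at index i. -/
def Inflection {n : ℕ} (u : ZMod n → E3) (i : ZMod n) : Prop :=
  det3 (u (i - 1)) (u i) (u (i + 1)) * det3 (u i) (u (i + 1)) (u (i + 2)) < 0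

/-- The polygon Q − uᵢ obtained by deleting the vertex uᵢ, reindexed over ZMod (n-1),
starting at u_{i+1}. -/
def eraseVertex {n : ℕ} (u : ZMod n → E3) (i : ZMod n) : ZMod (n - 1) → E3 :=
  fun j => u (i + 1 + (j.val : ZMod n))

/-- The open cone spanned by three vectors. -/
def openCone3 (a b c : E3) : Set E3 :=
  {x | ∃ l₁ l₂ l₃ : ℝ, 0 < l₁ ∧ 0 < l₂ ∧ 0 < l₃ ∧ x = l₁ • a + l₂ • b + l₃ • c}

end

/-- The unit edge vectors of a closed polygon in ℝ³, if not all on one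
great circle, are not contained in any closed hemisphere. -/
theorem stmt_2 {n : ℕ} (hn : 0 < n) (v : ZMod n → E3)
    (hclosed : ∀ i, v (i + 1) ≠ v i)
    (u : ZMod n → E3)
    (hu : ∀ i, u i = ‖v (i + 1) - v i‖⁻¹ • (v (i + 1) - v i))
    (hplane : ¬ ∃ w : E3, w ≠ 0 ∧ ∀ i, ⟪u i, w⟫ = 0) :
    IsBalanced u := by
  haveI : NeZero n := ⟨hn.ne'⟩
  intro w hw
  by_contra h
  push_neg at h
  apply hplane
  refine ⟨w, hw, fun i => ?_⟩
  have hc : ∀ i : ZMod n, (0:ℝ) < ‖v (i + 1) - v i‖ := fun i =>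
    norm_pos_iff.mpr (sub_ne_zero.mpr (hclosed i))
  have hterm : ∀ i : ZMod n, ⟪v (i + 1) - v i, w⟫ = ‖v (i + 1) - v i‖ * ⟪u i, w⟫ := by
    intro i
    rw [hu i, real_inner_smul_left, ← mul_assoc, mul_inv_cancel₀ (hc i).ne', one_mul]
  have hsum0 : ∑ i : ZMod n, ⟪v (i + 1) - v i, w⟫ = 0 := by
    rw [← sum_inner]
    have : ∑ i : ZMod n, (v (i + 1) - v i) = 0 := by
      rw [Finset.sum_sub_distrib]
      rw [sub_eq_zero]
      exact Fintype.sum_equiv (Equiv.addRight (1 : ZMod n)) _ _ (fun i => rfl)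
    rw [this, inner_zero_left]
  have hnonneg : ∀ i : ZMod n, 0 ≤ ⟪v (i + 1) - v i, w⟫ := fun i => by
    rw [hterm i]
    exact mul_nonneg (hc i).le (h i)
  have hall : ∀ i ∈ Finset.univ, ⟪v (i + 1) - v i, w⟫ = 0 :=
    (Finset.sum_eq_zero_iff_of_nonneg (fun i _ => hnonneg i)).mp hsum0
  have := hall i (Finset.mem_univ i)
  rw [hterm i] at this
  rcases mul_eq_zero.mp this with h1 | h1
  · exact absurd h1 (hc i).ne'
  · exact h1
end

section
/- Let u₁,...,uₙ ∈ S² (n ≥ 4) be points in general position that are not contained in any closed hemisphere. Then there exist positive real numbers λ₁,...,λₙ with λ₁u₁ + ... + λₙuₙ = 0; consequently there exists a closed polygon P = [v₁,...,vₙ] in ℝ³ whose unit edge vectors are exactly u₁,...,uₙ (i.e., Q = [u₁,...,uₙ] is the tangent indicatrix of P). -/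
open scoped RealInnerProductSpace

/-! Compactness of the unit sphere upgrades "not contained in a closed hemisphere" to a uniform
bound: every `w` has some `⟪u i, w⟫ ≥ δ ‖w‖`. By Hahn–Banach the ball of radius `δ` then lies in
the convex hull of the `u i`, so for small `ε > 0` the point `-ε ∑ u i` is a convex combination
`∑ w i • u i`, and `λ i = w i + ε` are positive weights with `∑ λ i • u i = 0`. The polygon is
given by the partial sums of the `λ i • u i`, which close up because their total is zero. -/

open Set Metric Finset

section ConvexHull

variable {ι E : Type*} [Fintype ι] [AddCommGroup E] [Module ℝ E]

lemma exists_nonneg_sum_smul_eq_of_mem_convexHull_range {u : ι → E} {x : E}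
    (hx : x ∈ convexHull ℝ (range u)) :
    ∃ w : ι → ℝ, (∀ i, 0 ≤ w i) ∧ ∑ i, w i • u i = x := by
  classical
  rw [convexHull_range_eq_exists_affineCombination] at hx
  obtain ⟨s, w, hw₀, hw₁, rfl⟩ := hx
  refine ⟨fun i => if i ∈ s then w i else 0, fun i => ?_, ?_⟩
  · dsimp only
    split_ifs with hi
    exacts [hw₀ i hi, le_rfl]
  · rw [s.affineCombination_eq_linear_combination u w hw₁, ← Finset.sum_subset (subset_univ s)]
    · exact Finset.sum_congr rfl fun i hi => by simp [hi]
    · intro i _ hi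
      simp [hi]

lemma exists_pos_sum_smul_eq_zero_of_zero_mem_interior [TopologicalSpace E]
    [ContinuousSMul ℝ E] {u : ι → E} (h : (0 : E) ∈ interior (convexHull ℝ (range u))) :
    ∃ lam : ι → ℝ, (∀ i, 0 < lam i) ∧ ∑ i, lam i • u i = 0 := by
  set s := ∑ i, u i
  have hcont : Continuous fun t : ℝ => (-t) • s := continuous_neg.smul continuous_const
  have hnhds : ∀ᶠ t in nhdsWithin (0 : ℝ) (Ioi 0), (-t) • s ∈ convexHull ℝ (range u) := by
    refine nhdsWithin_le_nhds (hcont.tendsto' 0 0 (by simp) ?_)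
    exact Filter.mem_of_superset (isOpen_interior.mem_nhds h) interior_subset
  obtain ⟨ε, hε, hεpos⟩ := (hnhds.and self_mem_nhdsWithin).exists
  obtain ⟨w, hw₀, hw⟩ := exists_nonneg_sum_smul_eq_of_mem_convexHull_range hε
  refine ⟨fun i => w i + ε, fun i => add_pos_of_nonneg_of_pos (hw₀ i) hεpos, ?_⟩
  simp only [add_smul, Finset.sum_add_distrib, hw, ← Finset.smul_sum, s, neg_smul, neg_add_cancel]

end ConvexHull

section InnerProductSpace

variable {ι E : Type*} [Fintype ι] [NormedAddCommGroup E] [InnerProductSpace ℝ E]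

lemma closedBall_subset_convexHull_range [CompleteSpace E] {u : ι → E} {δ : ℝ}
    (h : ∀ w, ∃ i, δ * ‖w‖ ≤ ⟪u i, w⟫) : closedBall 0 δ ⊆ convexHull ℝ (range u) := by
  intro x hx
  by_contra hx'
  obtain ⟨f, c, hfu, hfx⟩ := geometric_hahn_banach_closed_point (convex_convexHull ℝ _)
    ((finite_range u).isCompact_convexHull ℝ).isClosed hx'
  set w := (InnerProductSpace.toDual ℝ E).symm f
  have hf : ∀ y, f y = ⟪w, y⟫ := fun y => InnerProductSpace.toDual_symm_apply.symm
  obtain ⟨i, hi⟩ := h w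
  have hxw : ⟪w, x⟫ ≤ ‖w‖ * δ :=
    (real_inner_le_norm w x).trans (by gcongr; exact mem_closedBall_zero_iff.mp hx)
  have hui := hfu (u i) (subset_convexHull ℝ _ (mem_range_self i))
  rw [hf] at hui hfx
  rw [real_inner_comm] at hi
  -- `f (u i) < c < f x ≤ δ ‖w‖ ≤ f (u i)`
  linarith

lemma exists_pos_forall_exists_mul_norm_le_inner [FiniteDimensional ℝ E] [Nonempty ι]
    {u : ι → E} (h : ∀ w ≠ 0, ∃ i, 0 < ⟪u i, w⟫) :
    ∃ δ > 0, ∀ w, ∃ i, δ * ‖w‖ ≤ ⟪u i, w⟫ := by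
  let g : E → ℝ := fun w => univ.sup' univ_nonempty fun i => ⟪u i, w⟫
  have hg : Continuous g :=
    Continuous.finset_sup'_apply _ fun i _ => continuous_const.inner continuous_id
  obtain ⟨δ, hδ, hδg⟩ := (isCompact_sphere (0 : E) 1).exists_forall_le' hg.continuousOn
    fun p hp => by
      obtain ⟨i, hi⟩ := h p (ne_zero_of_mem_unit_sphere ⟨p, hp⟩)
      exact (lt_sup'_iff _).mpr ⟨i, mem_univ i, hi⟩
  refine ⟨δ, hδ, fun w => ?_⟩
  rcases eq_or_ne w 0 with rfl | hw
  · exact ⟨Classical.arbitrary ι, by simp⟩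
  have hnorm : 0 < ‖w‖ := norm_pos_iff.mpr hw
  obtain ⟨i, -, hi⟩ := exists_mem_eq_sup' univ_nonempty fun i => ⟪u i, ‖w‖⁻¹ • w⟫
  refine ⟨i, ?_⟩
  have := hδg (‖w‖⁻¹ • w) (by simp [norm_smul, hnorm.ne'])
  rw [show g (‖w‖⁻¹ • w) = _ from hi, real_inner_smul_right, le_inv_mul_iff₀ hnorm] at this
  linarith

lemma zero_mem_interior_convexHull_range [FiniteDimensional ℝ E] [Nonempty ι]
    {u : ι → E} (h : ∀ w ≠ 0, ∃ i, 0 < ⟪u i, w⟫) :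
    (0 : E) ∈ interior (convexHull ℝ (range u)) := by
  obtain ⟨δ, hδ, hu⟩ := exists_pos_forall_exists_mul_norm_le_inner h
  exact mem_interior_iff_mem_nhds.mpr
    (Filter.mem_of_superset (closedBall_mem_nhds 0 hδ) (closedBall_subset_convexHull_range hu))

end InnerProductSpace

namespace ZMod

variable {n : ℕ} [NeZero n] {G : Type*} [AddCommGroup G]

lemma sum_range_natCast (f : ZMod n → G) : ∑ k ∈ range n, f k = ∑ i, f i :=
  sum_nbij' (↑) val (fun _ _ => mem_univ _) (fun a _ => mem_range.mpr (val_lt a))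
    (fun _ ha => val_cast_of_lt (mem_range.mp ha)) (fun a _ => natCast_zmod_val a)
    (fun _ _ => rfl)

lemma exists_add_one_sub_eq_of_sum_eq_zero {f : ZMod n → G} (hf : ∑ i, f i = 0) :
    ∃ v : ZMod n → G, ∀ i, v (i + 1) - v i = f i := by
  have hrange : ∑ k ∈ range n, f k = 0 := (sum_range_natCast f).trans hf
  refine ⟨fun j => ∑ k ∈ range j.val, f k, fun j => ?_⟩
  have hj : j + 1 = ((j.val + 1 : ℕ) : ZMod n) := by push_cast [natCast_zmod_val]; rfl
  dsimp only
  rw [hj, val_natCast]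
  rcases (Nat.add_one_le_of_lt (val_lt j)).lt_or_eq with hlt | heq
  · rw [Nat.mod_eq_of_lt hlt, sum_range_succ, natCast_zmod_val, add_sub_cancel_left]
  · rw [heq, Nat.mod_self, sum_range_zero, zero_sub, neg_eq_iff_eq_neg, ← add_eq_zero_iff_eq_neg]
    have hsplit := sum_range_succ (fun k : ℕ => f k) j.val
    rwa [heq, natCast_zmod_val, hrange, eq_comm] at hsplit

end ZMod

theorem stmt_3_general {n : ℕ} [NeZero n] (u : ZMod n → E3)
    (hsph : ∀ i, ‖u i‖ = 1)
    (hbal : IsBalanced u) :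
    (∃ lam : ZMod n → ℝ, (∀ i, 0 < lam i) ∧ ∑ i, lam i • u i = 0) ∧
    (∃ v : ZMod n → E3, (∀ i, v (i + 1) ≠ v i) ∧
      ∀ i, u i = ‖v (i + 1) - v i‖⁻¹ • (v (i + 1) - v i)) := by
  have hpos : ∀ w ≠ 0, ∃ i, 0 < ⟪u i, w⟫ := fun w hw =>
    (hbal (-w) (neg_ne_zero.mpr hw)).imp fun i hi => by rwa [inner_neg_right, neg_lt_zero] at hi
  obtain ⟨lam, hlam, hsum⟩ :=
    exists_pos_sum_smul_eq_zero_of_zero_mem_interior (zero_mem_interior_convexHull_range hpos)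
  obtain ⟨v, hv⟩ := ZMod.exists_add_one_sub_eq_of_sum_eq_zero hsum
  have hedge : ∀ i, lam i • u i ≠ 0 := fun i =>
    smul_ne_zero (hlam i).ne' (norm_ne_zero_iff.mp (by simp [hsph i]))
  refine ⟨⟨lam, hlam, hsum⟩, v, fun i h => hedge i ?_, fun i => ?_⟩
  · rw [← hv i, h, sub_self]
  · rw [hv i, norm_smul, hsph i, mul_one, Real.norm_of_nonneg (hlam i).le, smul_smul,
      inv_mul_cancel₀ (hlam i).ne', one_smul]

/-- Points of S² in general position and not contained in any closed
hemisphere admit positive scalings summing to zero; consequently they are the unit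
edge vectors of some closed polygon in ℝ³. -/
theorem stmt_3 {n : ℕ} [NeZero n] (hn : 4 ≤ n) (u : ZMod n → E3)
    (hsph : ∀ i, ‖u i‖ = 1)
    (hgp : GeneralPosition u)
    (hbal : IsBalanced u) :
    (∃ lam : ZMod n → ℝ, (∀ i, 0 < lam i) ∧ ∑ i, lam i • u i = 0) ∧
    (∃ v : ZMod n → E3, (∀ i, v (i + 1) ≠ v i) ∧
      ∀ i, u i = ‖v (i + 1) - v i‖⁻¹ • (v (i + 1) - v i)) :=
  stmt_3_general u hsph hbal
end

section
/- Let u₁, u₂, u₃, u₄ ∈ S² be four points such that every three of them are linearly independent. Then the following are equivalent: (a) u₁, u₂, u₃, u₄ are not contained in any closed hemisphere; (b) −u₁ ∈ C(u₂,u₃,u₄); (c) sign[u₁,u₂,u₃] = sign[u₁,u₃,u₄] = −sign[u₁,u₂,u₄] = −sign[u₂,u₃,u₄] (all four determinants being nonzero). -/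
open scoped RealInnerProductSpace

/-! Since `u₂, u₃, u₄` form a basis, Cramer's rule gives
`[u₂,u₃,u₄] u₁ = [u₁,u₃,u₄] u₂ - [u₁,u₂,u₄] u₃ + [u₁,u₂,u₃] u₄`.
For a basis `(bᵢ)` and a vector `x`, the family `x, b₁, …, bₙ` lies in no closed half-space
exactly when every coordinate of `x` is negative: if the `j`-th coordinate is `≥ 0`, the dual
vector `b_j^*` has nonnegative inner product with the whole family; conversely, if all
coordinates are negative, `⟪x, w⟫ = ∑ cᵢ ⟪bᵢ, w⟫` forces `⟪bᵢ, w⟫ = 0` for every `i` once all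
the inner products are `≥ 0`. Both (b) and (c) are this coordinate condition on `u₁`, read off
Cramer's formula. -/

open Module

section Hemisphere

variable {E : Type*} [NormedAddCommGroup E] [InnerProductSpace ℝ E] {ι : Type*} [Fintype ι]

lemma Module.Basis.inner_eq_sum_repr_mul_inner (b : Basis ι ℝ E) (x w : E) :
    ⟪x, w⟫ = ∑ i, b.repr x i * ⟪b i, w⟫ := by
  conv_lhs => rw [← b.sum_repr x]
  simp only [sum_inner, real_inner_smul_left]

lemma Module.Basis.eq_zero_of_forall_inner_eq_zero (b : Basis ι ℝ E) {w : E}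
    (h : ∀ i, ⟪b i, w⟫ = 0) : w = 0 := by
  rw [← inner_self_eq_zero (𝕜 := ℝ), b.inner_eq_sum_repr_mul_inner]
  simp [h]

lemma Module.Basis.exists_inner_neg_iff_repr_neg (b : Basis ι ℝ E) (x : E) :
    (∀ w : E, w ≠ 0 → ⟪x, w⟫ < 0 ∨ ∃ i, ⟪b i, w⟫ < 0) ↔ ∀ i, b.repr x i < 0 := by
  have : FiniteDimensional ℝ E := Module.Finite.of_basis b
  constructor
  · intro hx j
    by_contra! hj
    set w := (InnerProductSpace.toDual ℝ E).symm (b.coord j).toContinuousLinearMap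
    have hw : ∀ y, ⟪y, w⟫ = b.repr y j := fun y => by
      rw [real_inner_comm, InnerProductSpace.toDual_symm_apply]; rfl
    have hw0 : w ≠ 0 := fun h0 => by simpa [h0] using hw (b j)
    rcases hx w hw0 with hneg | ⟨i, hi⟩
    · linarith [hw x]
    · rw [hw, b.repr_self] at hi
      exact absurd hi (not_lt.mpr (Finsupp.single_nonneg.mpr zero_le_one _))
  · intro hx w hw0
    by_contra! hw
    obtain ⟨hxw, hbw⟩ := hw
    have hterm : ∀ i ∈ Finset.univ, b.repr x i * ⟪b i, w⟫ ≤ 0 := fun i _ =>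
      mul_nonpos_of_nonpos_of_nonneg (hx i).le (hbw i)
    have hsum : ∑ i, b.repr x i * ⟪b i, w⟫ = 0 :=
      le_antisymm (Finset.sum_nonpos hterm) (b.inner_eq_sum_repr_mul_inner x w ▸ hxw)
    refine hw0 (b.eq_zero_of_forall_inner_eq_zero fun i => ?_)
    have hi := (Finset.sum_eq_zero_iff_of_nonpos hterm).mp hsum i (Finset.mem_univ i)
    exact (mul_eq_zero.mp hi).resolve_left (hx i).ne

end Hemisphere

lemma isBalanced_vecCons_iff {n : ℕ} (b : Basis (Fin n) ℝ E3) (x : E3) :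
    IsBalanced (Matrix.vecCons x b) ↔ ∀ i, b.repr x i < 0 := by
  rw [← b.exists_inner_neg_iff_repr_neg]
  simp only [IsBalanced, Fin.exists_fin_succ, Matrix.cons_val_zero, Matrix.cons_val_succ]

lemma mem_openCone3_iff (b : Basis (Fin 3) ℝ E3) (x : E3) :
    x ∈ openCone3 (b 0) (b 1) (b 2) ↔ ∀ i, 0 < b.repr x i := by
  constructor
  · rintro ⟨l₁, l₂, l₃, h₁, h₂, h₃, rfl⟩
    have hsum : l₁ • b 0 + l₂ • b 1 + l₃ • b 2 = ∑ i, ![l₁, l₂, l₃] i • b i := by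
      simp [Fin.sum_univ_three]
    rw [hsum, b.repr_sum_self]
    intro i
    fin_cases i <;> simpa
  · intro h
    refine ⟨_, _, _, h 0, h 1, h 2, ?_⟩
    conv_lhs => rw [← b.sum_repr x]
    exact Fin.sum_univ_three _

lemma det3_eq (u v w : E3) : det3 u v w =
    u 0 * (v 1 * w 2 - v 2 * w 1) - v 0 * (u 1 * w 2 - u 2 * w 1)
      + w 0 * (u 1 * v 2 - u 2 * v 1) := by
  simp [det3, Matrix.det_fin_three]; ring

lemma det3_ne_zero {u v w : E3} (h : LinearIndependent ℝ ![u, v, w]) : det3 u v w ≠ 0 := by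
  have hrows : det3 u v w = (Matrix.of fun i => WithLp.ofLp (![u, v, w] i)).det := by
    simp [det3, Matrix.det_fin_three]; ring
  rw [hrows, ← isUnit_iff_ne_zero, ← Matrix.isUnit_iff_isUnit_det,
    ← Matrix.linearIndependent_rows_iff_isUnit]
  exact h.map' (WithLp.linearEquiv 2 ℝ (Fin 3 → ℝ)).toLinearMap (LinearEquiv.ker _)

lemma det3_smul_eq (u₁ u₂ u₃ u₄ : E3) :
    det3 u₂ u₃ u₄ • u₁ =
      det3 u₁ u₃ u₄ • u₂ - det3 u₁ u₂ u₄ • u₃ + det3 u₁ u₂ u₃ • u₄ := by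
  ext i
  fin_cases i <;>
    · simp only [PiLp.smul_apply, PiLp.add_apply, PiLp.sub_apply, smul_eq_mul, det3_eq,
        Fin.zero_eta, Fin.mk_one, Fin.reduceFinMk]
      ring

lemma eq_det3_div_smul_add {u₁ u₂ u₃ u₄ : E3} (hD : det3 u₂ u₃ u₄ ≠ 0) :
    u₁ = (det3 u₁ u₃ u₄ / det3 u₂ u₃ u₄) • u₂ + (-det3 u₁ u₂ u₄ / det3 u₂ u₃ u₄) • u₃
      + (det3 u₁ u₂ u₃ / det3 u₂ u₃ u₄) • u₄ := by
  apply smul_right_injective E3 hD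
  dsimp only
  rw [det3_smul_eq]
  simp only [smul_add, smul_smul, mul_div_cancel₀ _ hD]
  module

lemma div_neg_iff_sign_eq_neg_sign {a d : ℝ} (hd : d ≠ 0) :
    a / d < 0 ↔ Real.sign a = -Real.sign d := by
  rcases lt_trichotomy a 0 with ha | rfl | ha <;> rcases hd.lt_or_gt with hd | hd <;>
    norm_num [Real.sign_of_neg, Real.sign_of_pos, div_neg_iff, not_lt_of_gt, *]

lemma div_pos_iff_sign_eq_sign {a d : ℝ} (hd : d ≠ 0) :
    0 < a / d ↔ Real.sign a = Real.sign d := by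
  rcases lt_trichotomy a 0 with ha | rfl | ha <;> rcases hd.lt_or_gt with hd | hd <;>
    norm_num [Real.sign_of_neg, Real.sign_of_pos, div_pos_iff, not_lt_of_gt, *]

theorem stmt_4_general (u₁ u₂ u₃ u₄ : E3)
    (hind : ∀ i j k : Fin 4, i ≠ j → i ≠ k → j ≠ k →
      LinearIndependent ℝ ![![u₁, u₂, u₃, u₄] i, ![u₁, u₂, u₃, u₄] j, ![u₁, u₂, u₃, u₄] k]) :
    (IsBalanced ![u₁, u₂, u₃, u₄] ↔ -u₁ ∈ openCone3 u₂ u₃ u₄) ∧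
    (IsBalanced ![u₁, u₂, u₃, u₄] ↔
      (Real.sign (det3 u₁ u₂ u₃) = Real.sign (det3 u₁ u₃ u₄) ∧
       Real.sign (det3 u₁ u₂ u₃) = - Real.sign (det3 u₁ u₂ u₄) ∧
       Real.sign (det3 u₁ u₂ u₃) = - Real.sign (det3 u₂ u₃ u₄))) := by
  have hli : LinearIndependent ℝ ![u₂, u₃, u₄] := by
    simpa using hind 1 2 3 (by decide) (by decide) (by decide)
  have hD : det3 u₂ u₃ u₄ ≠ 0 := det3_ne_zero hli
  let b := basisOfLinearIndependentOfCardEqFinrank hli (by simp)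
  have hb : ⇑b = ![u₂, u₃, u₄] := coe_basisOfLinearIndependentOfCardEqFinrank hli _
  have hrepr : ⇑(b.repr u₁) = ![det3 u₁ u₃ u₄ / det3 u₂ u₃ u₄,
      -det3 u₁ u₂ u₄ / det3 u₂ u₃ u₄, det3 u₁ u₂ u₃ / det3 u₂ u₃ u₄] := by
    have hsum : u₁ = ∑ i, ![det3 u₁ u₃ u₄ / det3 u₂ u₃ u₄,
        -det3 u₁ u₂ u₄ / det3 u₂ u₃ u₄, det3 u₁ u₂ u₃ / det3 u₂ u₃ u₄] i • b i := by
      simpa [Fin.sum_univ_three, hb] using eq_det3_div_smul_add hD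
    conv_lhs => rw [hsum]
    exact b.repr_sum_self _
  have hbal : IsBalanced ![u₁, u₂, u₃, u₄] ↔ ∀ i, b.repr u₁ i < 0 := by
    rw [← isBalanced_vecCons_iff b u₁, hb]
  have hcone : -u₁ ∈ openCone3 u₂ u₃ u₄ ↔ ∀ i, b.repr u₁ i < 0 := by
    simpa [hb] using mem_openCone3_iff b (-u₁)
  refine ⟨hbal.trans hcone.symm, ?_⟩
  rw [hbal, hrepr]
  simp only [Fin.forall_fin_succ, IsEmpty.forall_iff, Matrix.cons_val_zero, Matrix.cons_val_succ,
    and_true, neg_div, neg_lt_zero]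
  rw [div_neg_iff_sign_eq_neg_sign hD, div_pos_iff_sign_eq_sign hD,
    div_neg_iff_sign_eq_neg_sign hD]
  constructor <;> rintro ⟨h₁, h₂, h₃⟩ <;> refine ⟨?_, ?_, ?_⟩ <;> linarith

/-- For four points of S², every three of which are linearly
independent, the following are equivalent: (a) they are not contained in any closed
hemisphere; (b) −u₁ lies in the open cone C(u₂,u₃,u₄); (c) the sign relations
sign[u₁,u₂,u₃] = sign[u₁,u₃,u₄] = −sign[u₁,u₂,u₄] = −sign[u₂,u₃,u₄] hold. -/
theorem stmt_4 (u₁ u₂ u₃ u₄ : E3)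
    (h₁ : ‖u₁‖ = 1) (h₂ : ‖u₂‖ = 1) (h₃ : ‖u₃‖ = 1) (h₄ : ‖u₄‖ = 1)
    (hind : ∀ i j k : Fin 4, i ≠ j → i ≠ k → j ≠ k →
      LinearIndependent ℝ ![![u₁, u₂, u₃, u₄] i, ![u₁, u₂, u₃, u₄] j, ![u₁, u₂, u₃, u₄] k]) :
    (IsBalanced ![u₁, u₂, u₃, u₄] ↔ -u₁ ∈ openCone3 u₂ u₃ u₄) ∧
    (IsBalanced ![u₁, u₂, u₃, u₄] ↔
      (Real.sign (det3 u₁ u₂ u₃) = Real.sign (det3 u₁ u₃ u₄) ∧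
       Real.sign (det3 u₁ u₂ u₃) = - Real.sign (det3 u₁ u₂ u₄) ∧
       Real.sign (det3 u₁ u₂ u₃) = - Real.sign (det3 u₂ u₃ u₄))) :=
  stmt_4_general u₁ u₂ u₃ u₄ hind
end

section
/- Let u₁, u₂, u₃, u₄ ∈ S² be four points such that every three of them are linearly independent. Then the following are equivalent: (a) −u₁ ∈ C(u₂,u₃,u₄); (b) −u₂ ∈ C(u₁,u₃,u₄); (c) −u₃ ∈ C(u₁,u₂,u₄); (d) −u₄ ∈ C(u₁,u₂,u₃). -/
open scoped RealInnerProductSpace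

/-- Both sides say that `0` is a positive combination of `a, b, c, d`; this form is symmetric
in the four vectors. -/
lemma neg_mem_openCone3_iff {a b c d : E3} :
    -a ∈ openCone3 b c d ↔ ∃ l₀ l₁ l₂ l₃ : ℝ, 0 < l₀ ∧ 0 < l₁ ∧ 0 < l₂ ∧ 0 < l₃ ∧
      l₀ • a + l₁ • b + l₂ • c + l₃ • d = 0 := by
  constructor
  · rintro ⟨l₁, l₂, l₃, h₁, h₂, h₃, h⟩
    refine ⟨1, l₁, l₂, l₃, one_pos, h₁, h₂, h₃, ?_⟩
    rw [neg_eq_iff_eq_neg.mp h]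
    module
  · rintro ⟨l₀, l₁, l₂, l₃, h₀, h₁, h₂, h₃, h⟩
    refine ⟨l₁ / l₀, l₂ / l₀, l₃ / l₀, by positivity, by positivity, by positivity, ?_⟩
    have ha : l₀ • a = -(l₁ • b + l₂ • c + l₃ • d) :=
      eq_neg_of_add_eq_zero_left (by rw [← h]; abel)
    rw [← inv_smul_smul₀ h₀.ne' a, ha]
    module

theorem stmt_5_general (u₁ u₂ u₃ u₄ : E3) :
    ((-u₁ ∈ openCone3 u₂ u₃ u₄ ↔ -u₂ ∈ openCone3 u₁ u₃ u₄) ∧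
     (-u₁ ∈ openCone3 u₂ u₃ u₄ ↔ -u₃ ∈ openCone3 u₁ u₂ u₄) ∧
     (-u₁ ∈ openCone3 u₂ u₃ u₄ ↔ -u₄ ∈ openCone3 u₁ u₂ u₃)) := by
  simp only [neg_mem_openCone3_iff]
  refine ⟨⟨?_, ?_⟩, ⟨?_, ?_⟩, ⟨?_, ?_⟩⟩ <;> rintro ⟨l₁, l₂, l₃, l₄, h₁, h₂, h₃, h₄, h⟩
  · exact ⟨l₂, l₁, l₃, l₄, h₂, h₁, h₃, h₄, by rw [← h]; abel⟩
  · exact ⟨l₂, l₁, l₃, l₄, h₂, h₁, h₃, h₄, by rw [← h]; abel⟩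
  · exact ⟨l₃, l₁, l₂, l₄, h₃, h₁, h₂, h₄, by rw [← h]; abel⟩
  · exact ⟨l₂, l₃, l₁, l₄, h₂, h₃, h₁, h₄, by rw [← h]; abel⟩
  · exact ⟨l₄, l₁, l₂, l₃, h₄, h₁, h₂, h₃, by rw [← h]; abel⟩
  · exact ⟨l₂, l₃, l₄, l₁, h₂, h₃, h₄, h₁, by rw [← h]; abel⟩

/-- For four points of S², every three of which are linearly
independent, the four conditions −uᵢ ∈ C(of the other three) are equivalent. -/
theorem stmt_5 (u₁ u₂ u₃ u₄ : E3)
    (h₁ : ‖u₁‖ = 1) (h₂ : ‖u₂‖ = 1) (h₃ : ‖u₃‖ = 1) (h₄ : ‖u₄‖ = 1)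
    (hind : ∀ i j k : Fin 4, i ≠ j → i ≠ k → j ≠ k →
      LinearIndependent ℝ ![![u₁, u₂, u₃, u₄] i, ![u₁, u₂, u₃, u₄] j, ![u₁, u₂, u₃, u₄] k]) :
    ((-u₁ ∈ openCone3 u₂ u₃ u₄ ↔ -u₂ ∈ openCone3 u₁ u₃ u₄) ∧
     (-u₁ ∈ openCone3 u₂ u₃ u₄ ↔ -u₃ ∈ openCone3 u₁ u₂ u₄) ∧
     (-u₁ ∈ openCone3 u₂ u₃ u₄ ↔ -u₄ ∈ openCone3 u₁ u₂ u₃)) :=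
  stmt_5_general u₁ u₂ u₃ u₄
end

section
/- Let Q = {u₁,...,uₙ} be a set of n ≥ 5 points on S², in general position and not contained in any closed hemisphere. Then the set X = {u_i ∈ Q : the n−1 points {u₁,...,uₙ} \ {u_i} are not contained in any closed hemisphere} has at least n − 3 elements. -/
open scoped RealInnerProductSpace

/-!
Since the points lie in no closed hemisphere, `0` lies in their convex hull, and by
Carathéodory `0 = ∑ cᵢ uᵢ` with `c ≥ 0` supported on a set `S` of at most four indices.
General position makes every nonnegative nontrivial relation involve at least three points,
so a vector `w` with `⟪uᵢ, w⟫ ≥ 0` for all `i` would be orthogonal to three independent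
vectors; hence such a relation forces balancedness, and every point outside `S` can be removed.
To remove a point of `S` as well, pick `l ∉ S`, write `u l` through three points of `S`, and
subtract from this relation the largest multiple of `c` that keeps it nonnegative: the result
is a nonnegative relation, still nonzero at `l`, that vanishes at some `b ∈ S`.
-/

open Function Matrix

section Det3

variable {u v w : E3}

def columnMatrix (u v w : E3) : Matrix (Fin 3) (Fin 3) ℝ :=
  !![u 0, v 0, w 0; u 1, v 1, w 1; u 2, v 2, w 2]

lemma columnMatrix_mulVec (u v w : E3) (x : Fin 3 → ℝ) :
    columnMatrix u v w *ᵥ x = ⇑(x 0 • u + x 1 • v + x 2 • w) := by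
  ext i
  fin_cases i <;> simp [columnMatrix, mulVec, dotProduct, Fin.sum_univ_three] <;> ring

lemma det3_eq_zero_of_nontrivial_relation {a b c : ℝ} (habc : a ≠ 0 ∨ b ≠ 0 ∨ c ≠ 0)
    (h : a • u + b • v + c • w = 0) : det3 u v w = 0 := by
  refine exists_mulVec_eq_zero_iff.mp ⟨![a, b, c], ?_, ?_⟩
  · intro h0
    have := congrFun h0
    simp_all [Fin.forall_fin_succ]
  · change columnMatrix u v w *ᵥ _ = 0
    rw [columnMatrix_mulVec]
    simp [h]

lemma exists_smul_add_smul_add_smul_eq_of_det3_ne_zero (h : det3 u v w ≠ 0) (x : E3) :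
    ∃ a b c : ℝ, a • u + b • v + c • w = x := by
  have hunit : IsUnit (columnMatrix u v w).det := isUnit_iff_ne_zero.mpr h
  set y := (columnMatrix u v w)⁻¹ *ᵥ ⇑x
  refine ⟨y 0, y 1, y 2, ?_⟩
  have hy : columnMatrix u v w *ᵥ y = ⇑x := by
    rw [mulVec_mulVec, mul_nonsing_inv _ hunit, one_mulVec]
  ext i
  rw [← columnMatrix_mulVec, hy]

lemma eq_zero_of_det3_ne_zero_of_inner_eq_zero (h : det3 u v w ≠ 0) {x : E3}
    (hu : ⟪u, x⟫ = 0) (hv : ⟪v, x⟫ = 0) (hw : ⟪w, x⟫ = 0) : x = 0 := by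
  obtain ⟨a, b, c, hx⟩ := exists_smul_add_smul_add_smul_eq_of_det3_ne_zero h x
  rw [← inner_self_eq_zero (𝕜 := ℝ)]
  nth_rw 1 [← hx]
  simp [inner_add_left, real_inner_smul_left, hu, hv, hw]

end Det3

section GeneralPosition

variable {ι κ : Type*} {u : ι → E3}

lemma GeneralPosition.comp (hgp : GeneralPosition u) {f : κ → ι} (hf : Injective f) :
    GeneralPosition (u ∘ f) :=
  fun _ _ _ hij hik hjk => hgp _ _ _ (hf.ne hij) (hf.ne hik) (hf.ne hjk)

lemma GeneralPosition.two_lt_ncard_support [Fintype ι] (hgp : GeneralPosition u)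
    (hι : 3 ≤ Fintype.card ι) {c : ι → ℝ} (hc : c ≠ 0) (hrel : ∑ i, c i • u i = 0) :
    2 < (support c).ncard := by
  classical
  by_contra! hle
  obtain ⟨T, hcT, -, hT⟩ := Set.exists_subsuperset_card_eq (n := 3) (Set.subset_univ (support c))
    (by omega) (by rwa [Set.ncard_univ, Nat.card_eq_fintype_card])
  obtain ⟨i, j, k, hij, hik, hjk, rfl⟩ := Set.ncard_eq_three.mp hT
  have hrel3 : c i • u i + c j • u j + c k • u k = 0 := by
    rw [← hrel, ← Finset.sum_subset (Finset.subset_univ {i, j, k})]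
    · simp [Finset.sum_insert, hij, hik, hjk, add_assoc]
    · intro x _ hx
      have : x ∉ support c := fun h => hx (by simpa using hcT h)
      simp [notMem_support.mp this]
  obtain ⟨x, hx⟩ := Function.ne_iff.mp hc
  have hijk : c i ≠ 0 ∨ c j ≠ 0 ∨ c k ≠ 0 := by
    rcases hcT (mem_support.mpr hx) with rfl | rfl | rfl <;> simp_all
  exact hgp i j k hij hik hjk (det3_eq_zero_of_nontrivial_relation hijk hrel3)

lemma GeneralPosition.exists_relation_eq_one [Fintype ι] (hgp : GeneralPosition u)
    {i j k l : ι} (hij : i ≠ j) (hik : i ≠ k) (hjk : j ≠ k) (hli : l ≠ i) (hlj : l ≠ j)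
    (hlk : l ≠ k) : ∃ d : ι → ℝ, ∑ m, d m • u m = 0 ∧ d l = 1 ∧ support d ⊆ {i, j, k, l} := by
  classical
  obtain ⟨a, b, c, habc⟩ := exists_smul_add_smul_add_smul_eq_of_det3_ne_zero
    (hgp i j k hij hik hjk) (u l)
  refine ⟨Pi.single l 1 - Pi.single i a - Pi.single j b - Pi.single k c, ?_, ?_, ?_⟩
  · simp [sub_smul, Finset.sum_sub_distrib, Pi.single_apply, ite_smul, ← habc]
    abel
  · simp [hli, hlj, hlk]
  · intro m hm
    by_contra h
    simp only [Set.mem_insert_iff, Set.mem_singleton_iff, not_or] at h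
    simp [h] at hm

end GeneralPosition

section NonnegDependence

variable {ι E : Type*} [Fintype ι] [AddCommGroup E] [Module ℝ E]

def IsNonnegDependence (u : ι → E) (c : ι → ℝ) : Prop :=
  0 ≤ c ∧ c ≠ 0 ∧ ∑ i, c i • u i = 0

lemma IsNonnegDependence.exists_vanishing_at_mem_support {u : ι → E} {c d : ι → ℝ}
    (hc : IsNonnegDependence u c) (hd : ∑ i, d i • u i = 0)
    (hd_nonneg : ∀ i, c i = 0 → 0 ≤ d i) (hd_ne : ∃ i, c i = 0 ∧ d i ≠ 0) :
    ∃ b ∈ support c, ∃ c', IsNonnegDependence u c' ∧ c' b = 0 := by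
  obtain ⟨hc_nonneg, hc_ne, hc_rel⟩ := hc
  have hS : (Finset.univ.filter fun i => c i ≠ 0).Nonempty := by
    obtain ⟨i, hi⟩ := Function.ne_iff.mp hc_ne
    exact ⟨i, by simpa using hi⟩
  obtain ⟨b, hb, hmin⟩ := Finset.exists_min_image _ (fun i => d i / c i) hS
  have hcb : 0 < c b := lt_of_le_of_ne (hc_nonneg b) (Ne.symm (by simpa using hb))
  refine ⟨b, hcb.ne', d - (d b / c b) • c, ⟨fun i => ?_, ?_, ?_⟩, ?_⟩
  · by_cases hci : c i = 0
    · simpa [hci] using hd_nonneg i hci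
    · have hci' : 0 < c i := lt_of_le_of_ne (hc_nonneg i) (Ne.symm hci)
      have := hmin i (by simpa using hci)
      rw [div_le_div_iff₀ hcb hci'] at this
      simp only [Pi.zero_apply, Pi.sub_apply, Pi.smul_apply, smul_eq_mul, sub_nonneg]
      rw [div_mul_eq_mul_div, div_le_iff₀ hcb]
      linarith
  · obtain ⟨i, hci, hdi⟩ := hd_ne
    exact Function.ne_iff.mpr ⟨i, by simpa [hci] using hdi⟩
  · simp [sub_smul, Finset.sum_sub_distrib, mul_smul, ← Finset.smul_sum, hd, hc_rel]
  · simp [hcb.ne']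

end NonnegDependence

section Balanced

variable {ι : Type*} {u : ι → E3}

lemma IsNonnegDependence.isBalanced [Fintype ι] (hgp : GeneralPosition u)
    (hι : 3 ≤ Fintype.card ι) {c : ι → ℝ} (hc : IsNonnegDependence u c) : IsBalanced u := by
  obtain ⟨hc_nonneg, hc_ne, hc_rel⟩ := hc
  intro x hx
  by_contra! hux
  have hterm : ∀ i ∈ Finset.univ, c i * ⟪u i, x⟫ = 0 := by
    refine (Finset.sum_eq_zero_iff_of_nonneg fun i _ => mul_nonneg (hc_nonneg i) (hux i)).mp ?_
    simpa [sum_inner, real_inner_smul_left] using congrArg (⟪·, x⟫) hc_rel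
  have horth : ∀ i ∈ support c, ⟪u i, x⟫ = 0 := fun i hi =>
    (mul_eq_zero.mp (hterm i (Finset.mem_univ i))).resolve_left hi
  obtain ⟨i, hi, j, hj, k, hk, hij, hik, hjk⟩ :=
    (Set.two_lt_ncard).mp (hgp.two_lt_ncard_support hι hc_ne hc_rel)
  exact hx (eq_zero_of_det3_ne_zero_of_inner_eq_zero (hgp i j k hij hik hjk)
    (horth i hi) (horth j hj) (horth k hk))

lemma IsNonnegDependence.isBalanced_subtype_ne [Fintype ι] (hgp : GeneralPosition u)
    (hι : 4 ≤ Fintype.card ι) {c : ι → ℝ} (hc : IsNonnegDependence u c) {i : ι} (hci : c i = 0) :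
    IsBalanced fun j : {j // j ≠ i} => u j := by
  classical
  obtain ⟨hc_nonneg, hc_ne, hc_rel⟩ := hc
  refine IsNonnegDependence.isBalanced (hgp.comp Subtype.val_injective) ?_
    (c := fun j => c j) ⟨fun j => hc_nonneg j, ?_, ?_⟩
  · rw [Fintype.card_subtype_compl, Fintype.card_subtype_eq]
    omega
  · obtain ⟨j, hj⟩ := Function.ne_iff.mp hc_ne
    exact Function.ne_iff.mpr ⟨⟨j, by rintro rfl; exact hj hci⟩, hj⟩
  · simpa [Fintype.sum_eq_add_sum_subtype_ne _ i, hci] using hc_rel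

lemma IsBalanced.zero_mem_convexHull [Finite ι] (hbal : IsBalanced u) :
    (0 : E3) ∈ convexHull ℝ (Set.range u) := by
  by_contra h0
  obtain ⟨f, a, hf0, hfu⟩ := geometric_hahn_banach_point_closed (convex_convexHull ℝ _)
    ((Set.finite_range u).isClosed_convexHull ℝ) h0
  set x := (InnerProductSpace.toDual ℝ E3).symm f
  have hx : ∀ i, ⟪u i, x⟫ = f (u i) := fun i => by
    rw [real_inner_comm, InnerProductSpace.toDual_symm_apply]
  have hfpos : ∀ i, 0 < f (u i) := fun i =>
    (map_zero f ▸ hf0).trans (hfu _ (subset_convexHull ℝ _ (Set.mem_range_self i)))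
  obtain ⟨v, hv⟩ := exists_ne (0 : E3)
  obtain ⟨i₀, -⟩ := hbal v hv
  have hx0 : x ≠ 0 := fun h => by simpa [← hx, h] using hfpos i₀
  obtain ⟨i, hi⟩ := hbal x hx0
  linarith [hx i, hfpos i]

lemma IsBalanced.exists_isNonnegDependence [Fintype ι] (hbal : IsBalanced u) : ∃ c, IsNonnegDependence u c ∧ (support c).ncard ≤ 4 := by
  obtain ⟨κ, _, z, w, hz, hind, hw, hw1, hwz⟩ :=
    eq_pos_convex_span_of_mem_convexHull hbal.zero_mem_convexHull
  choose q hq using fun a => hz (Set.mem_range_self a)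
  have hq_inj : Injective q := fun a b h => hind.injective (by rw [← hq a, ← hq b, h])
  have hκ : Fintype.card κ ≤ 4 := by
    have := hind.card_le_finrank_succ
    have := (vectorSpan ℝ (Set.range z)).finrank_le
    rw [finrank_euclideanSpace_fin] at this
    omega
  have hc_q : ∀ a, extend q w 0 (q a) = w a := fun a => hq_inj.extend_apply w 0 a
  have hc_out : ∀ i ∉ Set.range q, extend q w 0 i = 0 := fun i hi =>
    extend_apply' w (0 : ι → ℝ) i fun ⟨a, ha⟩ => hi ⟨a, ha⟩
  refine ⟨extend q w 0, ⟨fun i => ?_, ?_, ?_⟩, ?_⟩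
  · by_cases hi : i ∈ Set.range q
    · obtain ⟨a, rfl⟩ := hi
      simpa [hc_q] using (hw a).le
    · simp [hc_out i hi]
  · have : Nonempty κ := by
      by_contra h
      simp [not_nonempty_iff.mp h] at hw1
    obtain ⟨a⟩ := this
    exact Function.ne_iff.mpr ⟨q a, by simpa [hc_q] using (hw a).ne'⟩
  · classical
    rw [← Finset.sum_subset (Finset.subset_univ (Finset.univ.map ⟨q, hq_inj⟩))]
    · simpa [hc_q, hq] using hwz
    · intro i _ hi
      simp [hc_out i (by simpa using hi)]
  · calc (support (extend q w 0)).ncard ≤ (Set.range q).ncard :=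
          Set.ncard_le_ncard fun i hi => by_contra fun h => hi (hc_out i h)
      _ = Fintype.card κ := by rw [Set.ncard_range_of_injective hq_inj, Nat.card_eq_fintype_card]
      _ ≤ 4 := hκ

lemma GeneralPosition.ncard_setOf_not_isBalanced_subtype_ne_le_three [Fintype ι]
    (hgp : GeneralPosition u) (hι : 5 ≤ Fintype.card ι) (hbal : IsBalanced u) :
    {i : ι | ¬IsBalanced fun j : {j // j ≠ i} => u j}.ncard ≤ 3 := by
  obtain ⟨c, hc, hc4⟩ := hbal.exists_isNonnegDependence
  have hremovable : ∀ {c' : ι → ℝ} {i : ι}, IsNonnegDependence u c' → c' i = 0 →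
      IsBalanced fun j : {j // j ≠ i} => u j := fun hc' hi =>
    hc'.isBalanced_subtype_ne hgp (by omega) hi
  obtain ⟨l, hl⟩ : ∃ l, l ∉ support c := by
    by_contra! h
    have := Set.eq_univ_of_forall h ▸ hc4
    rw [Set.ncard_univ, Nat.card_eq_fintype_card] at this
    omega
  obtain ⟨i, hi, j, hj, k, hk, hij, hik, hjk⟩ :=
    (Set.two_lt_ncard).mp (hgp.two_lt_ncard_support (by omega) hc.2.1 hc.2.2)
  obtain ⟨d, hd, hdl, hdS⟩ := hgp.exists_relation_eq_one (l := l) hij hik hjk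
    (by rintro rfl; exact hl hi) (by rintro rfl; exact hl hj) (by rintro rfl; exact hl hk)
  have hd_nonneg : ∀ m, c m = 0 → 0 ≤ d m := by
    intro m hm
    by_cases hml : m = l
    · simp [hml, hdl]
    · refine (notMem_support.mp fun hdm => ?_).ge
      rcases hdS hdm with rfl | rfl | rfl | rfl <;> simp_all
  obtain ⟨b, hb, c', hc', hc'b⟩ :=
    hc.exists_vanishing_at_mem_support hd hd_nonneg ⟨l, notMem_support.mp hl, by simp [hdl]⟩
  calc {i : ι | ¬IsBalanced fun j : {j // j ≠ i} => u j}.ncard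
      ≤ (support c \ {b}).ncard := Set.ncard_le_ncard fun i hi =>
        ⟨fun h => hi (hremovable hc h),
          fun hib => hi (hremovable hc' ((Set.mem_singleton_iff.mp hib) ▸ hc'b))⟩
    _ = (support c).ncard - 1 := Set.ncard_sdiff_singleton_of_mem hb
    _ ≤ 3 := by omega

end Balanced

theorem stmt_8_general {n : ℕ} (hn : 5 ≤ n) (u : Fin n → E3)
    (hgp : GeneralPosition u)
    (hbal : IsBalanced u) :
    n - 3 ≤ {i : Fin n | IsBalanced (fun j : {j : Fin n // j ≠ i} => u j)}.ncard := by
  have hle := hgp.ncard_setOf_not_isBalanced_subtype_ne_le_three (by simpa using hn) hbal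
  have hsum := Set.ncard_add_ncard_compl {i : Fin n | IsBalanced fun j : {j // j ≠ i} => u j}
  rw [Set.compl_ofPred, Nat.card_eq_fintype_card, Fintype.card_fin] at hsum
  omega

/-- For a set of n ≥ 5 points of S² in general position and not
contained in any closed hemisphere, at least n − 3 of the points can be removed
individually so that the remaining points are still not contained in any closed
hemisphere. -/
theorem stmt_8 {n : ℕ} (hn : 5 ≤ n) (u : Fin n → E3)
    (hinj : Function.Injective u)
    (hsph : ∀ i, ‖u i‖ = 1)
    (hgp : GeneralPosition u)
    (hbal : IsBalanced u) :
    n - 3 ≤ {i : Fin n | IsBalanced (fun j : {j : Fin n // j ≠ i} => u j)}.ncard :=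
  stmt_8_general hn u hgp hbal
end

section
/- Let Q = [u₁,u₂,u₃,u₄] be a spherical polygon with 4 vertices such that every three of the vertices are linearly independent. Then: (i) the vertices are balanced (not contained in any closed hemisphere) if and only if every index i ∈ {1,2,3,4} (mod 4) is a spherical inflection of Q; and (ii) if the vertices are balanced, then Q is simple. -/
open scoped RealInnerProductSpace

/-! Write `Tᵢ = [uᵢ, uᵢ₊₁, uᵢ₊₂]`. An inflection at `i` says that `uᵢ₋₁` and `uᵢ₊₂` lie strictly
on opposite sides of the plane through `uᵢ` and `uᵢ₊₁`; for balanced points this must hold, since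
otherwise all four points lie in a closed half-space bounded by that plane. Conversely, Cramer's
rule gives the relation `T₁ u₀ - T₂ u₁ + T₃ u₂ - T₀ u₃ = 0`; when the `Tᵢ` alternate in sign it is a
positive relation, and a positive relation among spanning vectors rules out every closed hemisphere.
Finally, an inflection at `i + 1` places the edges `[uᵢ, uᵢ₊₁]` and `[uᵢ₊₂, uᵢ₊₃]` in opposite closed
half-spaces of the plane through `uᵢ₊₁` and `uᵢ₊₂`, which they meet only in distinct vertices. -/

section Det3

variable (x y z v : E3)

lemma det3_rotate : det3 y z x = det3 x y z := by
  simp [det3, Matrix.det_fin_three]; ring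

lemma det3_self_left_mid : det3 x x y = 0 := by
  simp [det3, Matrix.det_fin_three]

lemma det3_self_left_right : det3 x y x = 0 := by
  simp [det3, Matrix.det_fin_three]

lemma det3_smul_add_smul_left (s t : ℝ) (a b : E3) :
    det3 (s • x + t • y) a b = s * det3 x a b + t * det3 y a b := by
  simp [det3, Matrix.det_fin_three]; ring

lemma exists_forall_inner_eq_det3 : ∃ w : E3, ∀ a, ⟪a, w⟫ = det3 a x y := by
  refine ⟨WithLp.toLp 2 (crossProduct (WithLp.ofLp x) (WithLp.ofLp y)), fun a => ?_⟩
  simp [PiLp.inner_apply, Fin.sum_univ_three, crossProduct, det3, Matrix.det_fin_three]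
  ring

lemma det3_smul_sub_smul_add_smul_sub_smul :
    det3 y z v • x - det3 z v x • y + det3 v x y • z - det3 x y z • v = 0 := by
  ext i
  fin_cases i <;> simp [det3, Matrix.det_fin_three] <;> ring

variable {x y z}

lemma LinearIndependent.det3_ne_zero (h : LinearIndependent ℝ ![x, y, z]) : det3 x y z ≠ 0 := by
  have hspan := h.span_eq_top_of_card_eq_finrank (by simp)
  have hunit := ((EuclideanSpace.basisFun (Fin 3) ℝ).toBasis.is_basis_iff_det).1 ⟨h, hspan⟩
  have hdet : (EuclideanSpace.basisFun (Fin 3) ℝ).toBasis.det ![x, y, z] = det3 x y z := by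
    simp [Module.Basis.det_apply, Module.Basis.toMatrix, det3, Matrix.det_fin_three]
  exact hdet ▸ hunit.ne_zero

lemma det3_zero_left (a b : E3) : det3 0 a b = 0 := by
  simpa using det3_smul_add_smul_left 0 0 0 0 a b

lemma linearIndependent_pair_of_det3_ne_zero (h : det3 x y z ≠ 0) :
    LinearIndependent ℝ ![x, y] := by
  refine LinearIndependent.pair_iff.2 fun s t hst => ⟨?_, ?_⟩
  · have := congrArg (det3 · y z) hst
    simp only [det3_smul_add_smul_left, det3_self_left_mid, det3_zero_left] at this
    simpa [h] using this
  · have := congrArg (det3 · z x) hst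
    simp only [det3_smul_add_smul_left, det3_self_left_right, det3_zero_left,
      det3_rotate x y z] at this
    simpa [h] using this

end Det3

lemma eq_zero_of_mul_eq_mul_of_mul_neg {s t a b : ℝ} (hs : 0 ≤ s) (ht : 0 ≤ t) (hab : a * b < 0)
    (h : s * a = t * b) : s = 0 ∧ t = 0 := by
  have hs' : s * (a * b) = t * b ^ 2 := by rw [← mul_assoc, h]; ring
  have ht' : t * (a * b) = s * a ^ 2 := by rw [mul_comm a, ← mul_assoc, ← h]; ring
  have hs0 : s * (a * b) = 0 :=
    le_antisymm (mul_nonpos_of_nonneg_of_nonpos hs hab.le) (hs' ▸ by positivity)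
  have ht0 : t * (a * b) = 0 :=
    le_antisymm (mul_nonpos_of_nonneg_of_nonpos ht hab.le) (ht' ▸ by positivity)
  exact ⟨(mul_eq_zero.1 hs0).resolve_right hab.ne, (mul_eq_zero.1 ht0).resolve_right hab.ne⟩

section SphericalEdge

variable {x y z v : E3}

lemma exists_eq_smul_add_smul_of_mem_sphericalEdge (hxy : LinearIndependent ℝ ![x, y])
    {p : E3} (hp : p ∈ sphericalEdge x y) :
    ∃ s t : ℝ, 0 ≤ s ∧ 0 ≤ t ∧ p = s • x + t • y ∧ ‖p‖ = 1 := by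
  obtain ⟨a, b, ha, hb, hab, rfl⟩ := hp
  have hV : a • x + b • y ≠ 0 := fun h0 => by
    obtain ⟨rfl, rfl⟩ := LinearIndependent.pair_iff.1 hxy a b h0
    simp at hab
  refine ⟨‖a • x + b • y‖⁻¹ * a, ‖a • x + b • y‖⁻¹ * b, by positivity, by positivity,
    by rw [smul_add, smul_smul, smul_smul], ?_⟩
  simpa using norm_smul_inv_norm (𝕜 := ℝ) hV

lemma sphericalEdge_inter_sphericalEdge (h : det3 x y z ≠ 0) (hy : ‖y‖ = 1) :
    sphericalEdge x y ∩ sphericalEdge y z = {y} := by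
  ext p
  constructor
  · rintro ⟨hp, hp'⟩
    obtain ⟨s, t, -, ht, rfl, hnorm⟩ :=
      exists_eq_smul_add_smul_of_mem_sphericalEdge (linearIndependent_pair_of_det3_ne_zero h) hp
    obtain ⟨s', t', -, -, heq, -⟩ := exists_eq_smul_add_smul_of_mem_sphericalEdge
      (linearIndependent_pair_of_det3_ne_zero (z := x) (by rwa [det3_rotate])) hp'
    have hs : s = 0 := by
      have := congrArg (det3 · y z) heq
      simp only [det3_smul_add_smul_left, det3_self_left_mid, det3_self_left_right] at this
      simpa [h] using this
    subst hs
    have ht1 : t = 1 := by simpa [norm_smul, hy, abs_of_nonneg ht] using hnorm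
    simp [ht1]
  · rintro rfl
    exact ⟨⟨0, 1, le_rfl, zero_le_one, by simp, by simp [hy]⟩,
      ⟨1, 0, zero_le_one, le_rfl, by simp, by simp [hy]⟩⟩

lemma disjoint_sphericalEdge_of_det3_mul_det3_neg (h : det3 x y z * det3 y z v < 0) :
    Disjoint (sphericalEdge x y) (sphericalEdge z v) := by
  have hxyz : det3 x y z ≠ 0 := left_ne_zero_of_mul h.ne
  have hyzv : det3 y z v ≠ 0 := right_ne_zero_of_mul h.ne
  rw [Set.disjoint_left]
  intro p hp hp'
  obtain ⟨s, t, hs, -, rfl, hnorm⟩ :=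
    exists_eq_smul_add_smul_of_mem_sphericalEdge (linearIndependent_pair_of_det3_ne_zero hxyz) hp
  obtain ⟨s', t', -, ht', heq, -⟩ := exists_eq_smul_add_smul_of_mem_sphericalEdge
    (linearIndependent_pair_of_det3_ne_zero (z := y) (by rwa [det3_rotate])) hp'
  have hside : s * det3 x y z = t' * det3 y z v := by
    have := congrArg (det3 · y z) heq
    simp only [det3_smul_add_smul_left, det3_self_left_mid, det3_self_left_right] at this
    rw [det3_rotate v y z]
    simpa using this
  obtain ⟨rfl, rfl⟩ := eq_zero_of_mul_eq_mul_of_mul_neg hs ht' h hside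
  simp only [zero_smul, zero_add, add_zero] at heq hnorm
  obtain ⟨rfl, -⟩ := LinearIndependent.pair_iff.1
    (linearIndependent_pair_of_det3_ne_zero (x := y) (y := z) (z := x) (by rwa [det3_rotate]))
    t (-s')
    (by rw [heq, neg_smul, add_neg_cancel])
  simp at hnorm

end SphericalEdge

namespace IsBalanced

variable {ι : Type*} {u : ι → E3}

lemma exists_inner_pos (hu : IsBalanced u) {w : E3} (hw : w ≠ 0) : ∃ i, 0 < ⟪u i, w⟫ := by
  obtain ⟨i, hi⟩ := hu (-w) (neg_ne_zero.2 hw)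
  exact ⟨i, by simpa using hi⟩

lemma inner_mul_inner_neg (hu : IsBalanced u) {w : E3} (hw : w ≠ 0) {p q : ι}
    (h : ∀ i, i ≠ p → i ≠ q → ⟪u i, w⟫ = 0) : ⟪u p, w⟫ * ⟪u q, w⟫ < 0 := by
  obtain ⟨i, hi⟩ := hu w hw
  obtain ⟨j, hj⟩ := hu.exists_inner_pos hw
  have mem : ∀ k, ⟪u k, w⟫ ≠ 0 → k = p ∨ k = q := fun k hk => by
    by_contra! hne
    exact hk (h k hne.1 hne.2)
  rcases mem i hi.ne with rfl | rfl <;> rcases mem j hj.ne' with rfl | rfl <;> nlinarith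

lemma det3_mul_det3_neg (hu : IsBalanced u) {p q j k : ι}
    (hcover : ∀ i, i = p ∨ i = q ∨ i = j ∨ i = k) (hp : det3 (u p) (u j) (u k) ≠ 0) :
    det3 (u p) (u j) (u k) * det3 (u q) (u j) (u k) < 0 := by
  obtain ⟨w, hw⟩ := exists_forall_inner_eq_det3 (u j) (u k)
  simp only [← hw] at hp ⊢
  refine hu.inner_mul_inner_neg (fun hw0 => hp (by rw [hw0, inner_zero_right])) fun i hip hiq => ?_
  rcases hcover i with rfl | rfl | rfl | rfl
  · exact absurd rfl hip
  · exact absurd rfl hiq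
  · rw [hw, det3_self_left_mid]
  · rw [hw, det3_self_left_right]

lemma inflection {u : ZMod 4 → E3} (hu : IsBalanced u) (hgp : GeneralPosition u) (i : ZMod 4) :
    Inflection u i := by
  unfold Inflection
  rw [det3_rotate (u (i + 2))]
  exact hu.det3_mul_det3_neg (by revert i; decide) (hgp _ _ _ (by revert i; decide)
    (by revert i; decide) (by revert i; decide))

end IsBalanced

lemma isBalanced_of_sum_smul_eq_zero {ι : Type*} [Fintype ι] {u : ι → E3} {c : ι → ℝ}
    (hc : ∀ i, 0 < c i) (hsum : ∑ i, c i • u i = 0)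
    (hspan : Submodule.span ℝ (Set.range u) = ⊤) : IsBalanced u := by
  intro w hw
  by_contra! hnonneg
  have hzero : ∀ i, ⟪u i, w⟫ = 0 := by
    have hsum' : ∑ i, c i * ⟪u i, w⟫ = 0 := by
      simpa [sum_inner, real_inner_smul_left] using congrArg (⟪·, w⟫) hsum
    intro i
    have := (Finset.sum_eq_zero_iff_of_nonneg fun j _ => mul_nonneg (hc j).le (hnonneg j)).1
      hsum' i (Finset.mem_univ i)
    exact (mul_eq_zero.1 this).resolve_left (hc i).ne'
  have hker : Submodule.span ℝ (Set.range u) ≤ LinearMap.ker (innerₛₗ ℝ w) :=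
    Submodule.span_le.2 (by rintro _ ⟨i, rfl⟩; simpa [real_inner_comm] using hzero i)
  rw [hspan] at hker
  exact hw (inner_self_eq_zero.1 (hker Submodule.mem_top))

lemma isBalanced_of_forall_inflection {u : ZMod 4 → E3}
    (hli : LinearIndependent ℝ ![u 0, u 1, u 2]) (h : ∀ i, Inflection u i) : IsBalanced u := by
  set T₀ := det3 (u 0) (u 1) (u 2)
  set T₁ := det3 (u 1) (u 2) (u 3)
  set T₂ := det3 (u 2) (u 3) (u 0)
  set T₃ := det3 (u 3) (u 0) (u 1)
  have h₀ : T₃ * T₀ < 0 := h 0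
  have h₁ : T₀ * T₁ < 0 := h 1
  have h₂ : T₁ * T₂ < 0 := h 2
  have h₁₃ : 0 < T₁ * T₃ :=
    pos_of_mul_pos_right ((mul_pos_of_neg_of_neg h₀ h₁).trans_eq (by ring)) (sq_nonneg T₀)
  -- the signs of the `Tᵢ` alternate, so this multiple of the Cramer relation is positive
  refine isBalanced_of_sum_smul_eq_zero
    (c := (![T₁ * T₁, -(T₁ * T₂), T₁ * T₃, -(T₁ * T₀)] : ZMod 4 → ℝ)) ?_ ?_ ?_
  · intro i
    fin_cases i <;> simp [left_ne_zero_of_mul h₂.ne, h₂, h₁₃, mul_comm T₁ T₀, h₁]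
  · have hsum : ∀ f : ZMod 4 → E3, ∑ i, f i = f 0 + f 1 + f 2 + f 3 := Fin.sum_univ_four
    rw [hsum]
    simp only [Matrix.cons_val, neg_smul]
    linear_combination (norm := module)
      T₁ • det3_smul_sub_smul_add_smul_sub_smul (u 0) (u 1) (u 2) (u 3)
  · refine top_unique ((hli.span_eq_top_of_card_eq_finrank (by simp)).symm.trans_le
      (Submodule.span_mono ?_))
    rintro _ ⟨i, rfl⟩
    fin_cases i <;> exact Set.mem_range_self _

lemma disjoint_polyEdge_of_inflection {n : ℕ} {u : ZMod n → E3} {i : ZMod n}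
    (h : Inflection u (i + 1)) : Disjoint (polyEdge u i) (polyEdge u (i + 2)) := by
  unfold Inflection at h
  unfold polyEdge
  rw [add_sub_cancel_right, show i + 1 + 2 = i + 2 + 1 by ring, add_assoc i 1 1,
    one_add_one_eq_two] at h
  exact disjoint_sphericalEdge_of_det3_mul_det3_neg h

lemma isSimple_of_forall_inflection {u : ZMod 4 → E3} (hnorm : ∀ i, ‖u i‖ = 1)
    (hgp : GeneralPosition u) (h : ∀ i, Inflection u i) : IsSimple u := by
  refine ⟨fun i j hji hji' hij => ?_, fun i =>
    sphericalEdge_inter_sphericalEdge (hgp _ _ _ ?_ ?_ ?_) (hnorm _)⟩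
  · obtain rfl : j = i + 2 := by revert i j; decide
    exact disjoint_polyEdge_of_inflection (h _)
  all_goals revert i; decide

/-- For a spherical polygon with 4 vertices, every three of which are
linearly independent: (i) the vertices are balanced iff every index is a spherical
inflection; (ii) if the vertices are balanced then the polygon is simple. -/
theorem stmt_17 (u : ZMod 4 → E3)
    (hpoly : IsSphericalPolygon u)
    (hind : ∀ i j k : ZMod 4, i ≠ j → i ≠ k → j ≠ k →
      LinearIndependent ℝ ![u i, u j, u k]) :
    (IsBalanced u ↔ ∀ i : ZMod 4, Inflection u i) ∧
    (IsBalanced u → IsSimple u) := by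
  have hgp : GeneralPosition u := fun i j k hij hik hjk => (hind i j k hij hik hjk).det3_ne_zero
  have hbal : IsBalanced u ↔ ∀ i, Inflection u i :=
    ⟨fun hu => hu.inflection hgp,
      isBalanced_of_forall_inflection (hind 0 1 2 (by decide) (by decide) (by decide))⟩
  exact ⟨hbal, fun hu => isSimple_of_forall_inflection hpoly.1 hgp (hbal.1 hu)⟩
end
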